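/- For fixed 0 < p < 1 with p ≠ 1/2, the evidence E(n) = (exp(S(n))/V(n))^{1/c₁} for the one-sided binomial contrast, where S(n) = n·[p log(2p) + (1−p) log(2(1−p))] and V(n) = 2^n∫₀^{1/2} θ^{pn}(1−θ)^{n(1−p)} dθ, tends to infinity as n → ∞. -/
import Mathlib


open Real Filter intervalIntegral

/-- Strong concavity of log on (0,1]: quadratic upper bound. -/
lemma log_quad {s t : ℝ} (hs : 0 < s) (hs1 : s ≤ 1) (ht : 0 < t) (ht1 : t ≤ 1) :
    Real.log t - Real.log s ≤ (t - s) / s - (t - s) ^ 2 / 2 := by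
  have h0 : (0 : ℝ) ∉ Set.uIcc s t := Set.notMem_uIcc_of_lt hs ht
  have hint1 : (∫ u in s..t, u⁻¹) = Real.log t - Real.log s := by
    rw [integral_inv h0, Real.log_div ht.ne' hs.ne']
  have hint2 : (∫ u in s..t, (s⁻¹ + s - u)) = (t - s) / s - (t - s) ^ 2 / 2 := by
    have : (∫ u in s..t, (s⁻¹ + s - u)) = (s⁻¹ + s) * (t - s) - (t ^ 2 - s ^ 2) / 2 := by
      rw [intervalIntegral.integral_sub (intervalIntegrable_const) intervalIntegrable_id]
      rw [intervalIntegral.integral_const, integral_id]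
      simp only [smul_eq_mul]; ring
    rw [this]
    field_simp
    ring
  have hcont : ContinuousOn (fun u : ℝ => u⁻¹) (Set.uIcc s t) :=
    ContinuousOn.inv₀ continuousOn_id (fun u hu => by
      rintro rfl; exact h0 hu)
  have hint_i : IntervalIntegrable (fun u : ℝ => u⁻¹) MeasureTheory.volume s t :=
    hcont.intervalIntegrable
  have hint_g : IntervalIntegrable (fun u : ℝ => s⁻¹ + s - u) MeasureTheory.volume s t :=
    ((continuous_const.sub continuous_id).intervalIntegrable _ _)
  rw [← hint1, ← hint2]
  rcases le_total s t with hst | hst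
  · apply intervalIntegral.integral_mono_on hst hint_i hint_g
    intro u hu
    have hu0 : 0 < u := lt_of_lt_of_le hs hu.1
    have hu1 : u ≤ 1 := le_trans hu.2 ht1
    rw [show u⁻¹ = 1 / u from (one_div u).symm, div_le_iff₀ hu0]
    have hsi : s⁻¹ * s = 1 := inv_mul_cancel₀ hs.ne'
    have h1 : (1 : ℝ) ≤ s⁻¹ := one_le_inv₀ hs |>.mpr hs1
    nlinarith [mul_nonneg (sub_nonneg.mpr hu.1) (sub_nonneg.mpr h1),
      mul_nonneg (sub_nonneg.mpr hu.1) (sub_nonneg.mpr hu1)]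
  · have e1 := intervalIntegral.integral_symm (f := fun u : ℝ => u⁻¹)
      (μ := MeasureTheory.volume) s t
    have e2 := intervalIntegral.integral_symm (f := fun u : ℝ => s⁻¹ + s - u)
      (μ := MeasureTheory.volume) s t
    have hmono : (∫ u in t..s, (s⁻¹ + s - u)) ≤ ∫ u in t..s, u⁻¹ := by
      apply intervalIntegral.integral_mono_on hst hint_g.symm hint_i.symm
      intro u hu
      have hus : u ≤ s := hu.2
      have hu0 : 0 < u := lt_of_lt_of_le ht hu.1
      rw [show u⁻¹ = 1 / u from (one_div u).symm, le_div_iff₀ hu0]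
      have hsi : s⁻¹ * s = 1 := inv_mul_cancel₀ hs.ne'
      have h1 : (1 : ℝ) ≤ s⁻¹ := one_le_inv₀ hs |>.mpr hs1
      nlinarith [mul_nonneg (sub_nonneg.mpr hus) (sub_nonneg.mpr h1),
        mul_nonneg (sub_nonneg.mpr hus) (mul_pos hu0 hs).le,
        mul_nonneg (mul_nonneg (sub_nonneg.mpr hus) hu0.le) hs.le]
    linarith [e1, e2, hmono]

/-- Pointwise entropy bound from strong log-concavity. -/
lemma entropy_quad {p θ : ℝ} (hp : 0 < p) (hp' : p < 1) (hθ : 0 < θ) (hθ1 : θ < 1) :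
    p * Real.log θ + (1 - p) * Real.log (1 - θ) ≤
      p * Real.log p + (1 - p) * Real.log (1 - p) - (θ - p) ^ 2 / 2 := by
  have h1 := log_quad hp hp'.le hθ hθ1.le
  have h2 := log_quad (s := 1 - p) (t := 1 - θ) (by linarith) (by linarith) (by linarith)
    (by linarith)
  have h1' : p * Real.log θ - p * Real.log p ≤ (θ - p) - p * (θ - p) ^ 2 / 2 := by
    have h := mul_le_mul_of_nonneg_left h1 hp.le
    have e : p * ((θ - p) / p - (θ - p) ^ 2 / 2) = (θ - p) - p * (θ - p) ^ 2 / 2 := by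
      field_simp
    nlinarith [h, e]
  have h2' : (1 - p) * Real.log (1 - θ) - (1 - p) * Real.log (1 - p) ≤
      (p - θ) - (1 - p) * (θ - p) ^ 2 / 2 := by
    have hne : (1:ℝ) - p ≠ 0 := ne_of_gt (by linarith)
    have h := mul_le_mul_of_nonneg_left h2 (by linarith : (0:ℝ) ≤ 1 - p)
    have e : (1 - p) * ((1 - θ - (1 - p)) / (1 - p) - (1 - θ - (1 - p)) ^ 2 / 2) =
        (p - θ) - (1 - p) * (θ - p) ^ 2 / 2 := by
      field_simp
      ring
    nlinarith [h, e]
  nlinarith [h1', h2']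

theorem one_sided_evidence_tendsto_atTop' (p : ℝ) (hp : 0 < p) (hp' : p < 1) :
    Filter.Tendsto (fun n : ℕ =>
      (Real.exp ((n : ℝ) * (p * Real.log (2 * p) + (1 - p) * Real.log (2 * (1 - p)))) /
        ((2 : ℝ) ^ n * ∫ θ in (0 : ℝ)..(1 / 2),
          θ ^ (p * n) * (1 - θ) ^ ((1 - p) * n))) ^ ((1 : ℝ) / 1.5))
      Filter.atTop Filter.atTop := by
  have hp1 : (0:ℝ) < 1 - p := by linarith
  have htarget : Tendsto (fun n : ℕ => ((n : ℝ) / (2 * π)) ^ ((1:ℝ)/3)) atTop atTop :=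
    (tendsto_rpow_atTop (by norm_num)).comp
      (tendsto_natCast_atTop_atTop.atTop_div_const (by positivity))
  apply tendsto_atTop_mono' _ _ htarget
  filter_upwards [eventually_ge_atTop 1] with n hn
  have hn0 : (0:ℝ) < n := by exact_mod_cast hn
  have hpn : 0 < p * (n:ℝ) := by positivity
  have hqn : 0 < (1 - p) * (n:ℝ) := by positivity
  -- continuity / integrability of the integrand
  have hcf : Continuous (fun θ : ℝ => θ ^ (p * (n:ℝ)) * (1 - θ) ^ ((1 - p) * (n:ℝ))) := by
    exact (Real.continuous_rpow_const hpn.le).mul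
      ((Real.continuous_rpow_const hqn.le).comp (continuous_const.sub continuous_id))
  set I := ∫ θ in (0:ℝ)..(1/2), θ ^ (p * (n:ℝ)) * (1 - θ) ^ ((1 - p) * (n:ℝ)) with hI
  have hIpos : 0 < I := by
    apply intervalIntegral.intervalIntegral_pos_of_pos_on
      (hcf.intervalIntegrable _ _) _ (by norm_num)
    intro x hx
    have hx0 : 0 < x := hx.1
    have hx1 : 0 < 1 - x := by have := hx.2; norm_num at this ⊢; linarith
    positivity
  set K : ℝ := p * Real.log p + (1 - p) * Real.log (1 - p) with hKdef
  -- the Gaussian majorant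
  have hmaj : I ≤ Real.exp ((n:ℝ) * K) * Real.sqrt (2 * π / n) := by
    have step1 : I ≤ ∫ θ in (0:ℝ)..(1/2),
        Real.exp ((n:ℝ) * K) * Real.exp (-((n:ℝ)/2) * (θ - p) ^ 2) := by
      apply intervalIntegral.integral_mono_on (by norm_num) (hcf.intervalIntegrable _ _)
        ((Continuous.intervalIntegrable (by fun_prop)) _ _)
      intro θ hθ
      rcases eq_or_lt_of_le hθ.1 with h0 | h0
      · rw [← h0]
        rw [Real.zero_rpow hpn.ne', zero_mul]
        positivity
      · have hθ1 : θ < 1 := by have := hθ.2; linarith [hθ.2]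
        rw [Real.rpow_def_of_pos h0, Real.rpow_def_of_pos (by linarith : (0:ℝ) < 1 - θ),
          ← Real.exp_add, ← Real.exp_add, Real.exp_le_exp]
        have := entropy_quad hp hp' h0 hθ1
        have hmul := mul_le_mul_of_nonneg_left this (le_of_lt hn0)
        nlinarith [hmul]
    have step2 : (∫ θ in (0:ℝ)..(1/2), Real.exp (-((n:ℝ)/2) * (θ - p) ^ 2))
        ≤ Real.sqrt (2 * π / n) := by
      have hb : (0:ℝ) < (n:ℝ)/2 := by positivity
      have hint : MeasureTheory.Integrable
          (fun θ : ℝ => Real.exp (-((n:ℝ)/2) * (θ - p) ^ 2)) := by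
        exact (integrable_exp_neg_mul_sq hb).comp_sub_right p
      have h1 : (∫ θ in (0:ℝ)..(1/2), Real.exp (-((n:ℝ)/2) * (θ - p) ^ 2))
          ≤ ∫ θ : ℝ, Real.exp (-((n:ℝ)/2) * (θ - p) ^ 2) := by
        rw [intervalIntegral.integral_of_le (by norm_num)]
        exact MeasureTheory.setIntegral_le_integral hint
          (Filter.Eventually.of_forall fun x => by positivity)
      have h2 : (∫ θ : ℝ, Real.exp (-((n:ℝ)/2) * (θ - p) ^ 2)) = Real.sqrt (2 * π / n) := by
        rw [MeasureTheory.integral_sub_right_eq_self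
          (fun x => Real.exp (-((n:ℝ)/2) * x ^ 2)) p, integral_gaussian]
        congr 1
        field_simp
      linarith [h1, h2]
    calc I ≤ ∫ θ in (0:ℝ)..(1/2),
        Real.exp ((n:ℝ) * K) * Real.exp (-((n:ℝ)/2) * (θ - p) ^ 2) := step1
      _ = Real.exp ((n:ℝ) * K) * ∫ θ in (0:ℝ)..(1/2),
          Real.exp (-((n:ℝ)/2) * (θ - p) ^ 2) := intervalIntegral.integral_const_mul _ _
      _ ≤ Real.exp ((n:ℝ) * K) * Real.sqrt (2 * π / n) := by
          exact mul_le_mul_of_nonneg_left step2 (Real.exp_nonneg _)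
  -- rewrite the numerator
  have hS : (n : ℝ) * (p * Real.log (2 * p) + (1 - p) * Real.log (2 * (1 - p)))
      = (n:ℝ) * Real.log 2 + (n:ℝ) * K := by
    rw [Real.log_mul two_ne_zero hp.ne', Real.log_mul two_ne_zero hp1.ne', hKdef]
    ring
  have h2n : ((2:ℝ) ^ n) = Real.exp ((n:ℝ) * Real.log 2) := by
    rw [Real.exp_nat_mul, Real.exp_log two_pos]
  -- main lower bound on the ratio
  have hsqrtpos : 0 < Real.sqrt (2 * π / n) := by
    apply Real.sqrt_pos.mpr; positivity
  have hden_pos : 0 < (2:ℝ) ^ n * I := by positivity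
  have hratio : Real.sqrt ((n:ℝ) / (2 * π)) ≤
      Real.exp ((n : ℝ) * (p * Real.log (2 * p) + (1 - p) * Real.log (2 * (1 - p)))) /
        ((2:ℝ) ^ n * I) := by
    rw [le_div_iff₀ hden_pos, hS, Real.exp_add]
    have hmul : (2:ℝ) ^ n * I ≤ Real.exp ((n:ℝ) * Real.log 2) *
        (Real.exp ((n:ℝ) * K) * Real.sqrt (2 * π / n)) := by
      rw [h2n]
      exact mul_le_mul_of_nonneg_left hmaj (Real.exp_nonneg _)
    have hss : Real.sqrt ((n:ℝ) / (2 * π)) * Real.sqrt (2 * π / n) = 1 := by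
      rw [← Real.sqrt_mul (by positivity) , show (n:ℝ) / (2 * π) * (2 * π / n) = 1 by
        field_simp, Real.sqrt_one]
    calc Real.sqrt ((n:ℝ) / (2 * π)) * ((2:ℝ) ^ n * I)
        ≤ Real.sqrt ((n:ℝ) / (2 * π)) * (Real.exp ((n:ℝ) * Real.log 2) *
          (Real.exp ((n:ℝ) * K) * Real.sqrt (2 * π / n))) :=
          mul_le_mul_of_nonneg_left hmul (Real.sqrt_nonneg _)
      _ = Real.exp ((n:ℝ) * Real.log 2) * Real.exp ((n:ℝ) * K) *
          (Real.sqrt ((n:ℝ) / (2 * π)) * Real.sqrt (2 * π / n)) := by ring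
      _ = Real.exp ((n:ℝ) * Real.log 2) * Real.exp ((n:ℝ) * K) := by rw [hss, mul_one]
  -- conclude
  have hbase_nonneg : 0 ≤ Real.sqrt ((n:ℝ) / (2 * π)) := Real.sqrt_nonneg _
  have hrpow := Real.rpow_le_rpow hbase_nonneg hratio (by norm_num : (0:ℝ) ≤ 1/1.5)
  have hle : ((n:ℝ) / (2 * π)) ^ ((1:ℝ)/3) =
      Real.sqrt ((n:ℝ) / (2 * π)) ^ ((1:ℝ)/1.5) := by
    rw [Real.sqrt_eq_rpow, ← Real.rpow_mul (by positivity)]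
    norm_num
  calc ((n:ℝ) / (2 * π)) ^ ((1:ℝ)/3)
      = Real.sqrt ((n:ℝ) / (2 * π)) ^ ((1:ℝ)/1.5) := hle
    _ ≤ _ := hrpow

/-- for fixed p ≠ 1/2, the one-sided evidence
E(n) = (exp(S(n))/V(n))^{1/1.5} tends to infinity as n → ∞. -/
theorem one_sided_evidence_tendsto_atTop (p : ℝ) (hp : 0 < p) (hp' : p < 1)
    (hhalf : p ≠ 1 / 2) :
    Filter.Tendsto (fun n : ℕ =>
      (Real.exp ((n : ℝ) * (p * Real.log (2 * p) + (1 - p) * Real.log (2 * (1 - p)))) /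
        ((2 : ℝ) ^ n * ∫ θ in (0 : ℝ)..(1 / 2),
          θ ^ (p * n) * (1 - θ) ^ ((1 - p) * n))) ^ ((1 : ℝ) / 1.5))
      Filter.atTop Filter.atTop :=
  one_sided_evidence_tendsto_atTop' p hp hp'
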